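/- Let q be a prime power, n, m ≥ 1 with gcd(m+n, q-1) = 1. Let f₁, f₂ ∈ 𝔽_q[x,y] be coprime homogeneous polynomials of degree n with f₁ having no yⁿ term, and let g ∈ 𝔽_q[x,y] be homogeneous of degree m whose only zero in 𝔽_q² is (0,0). Then (f₁·g, f₂·g) induces a bijection of 𝔽_q² if and only if t ↦ f₁(1,t)/f₂(1,t) induces a bijection of ℙ¹(𝔽_q). -/

import Mathlib

/-!
The map `Φ = (f₁ g, f₂ g)` is homogeneous of degree `m + n`, and it vanishes only at the
origin: `g` has no nontrivial zero, and a common zero `(x, y) ≠ 0` of `f₁, f₂` would make the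
linear form `x Y - y X` a common factor. So `Φ` sends the line through `p` to the line through
`(f₁ p, f₂ p)`, which is the map `t ↦ f₁(1, t) / f₂(1, t)` of `ℙ¹`. Since `s ↦ s ^ (m + n)` is
a bijection of `𝔽_q`, every scalar is an `(m + n)`-th power, so `Φ` is injective exactly when
the induced map on lines is; on finite sets injectivity is bijectivity.
-/

open MvPolynomial
open Function (Bijective Injective)

section PowBijective

variable {F : Type*} [Field F] [Fintype F]

theorem pow_bijective_of_coprime_card_sub_one {k : ℕ} (hk : 0 < k)
    (hcop : k.Coprime (Fintype.card F - 1)) : Bijective fun x : F => x ^ k := by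
  rw [← Finite.injective_iff_bijective]
  have hunits : Bijective fun u : Fˣ => u ^ k := by
    apply Nat.Coprime.pow_left_bijective
    rwa [Nat.card_units, Nat.card_eq_fintype_card, Nat.coprime_comm]
  intro x y (hxy : x ^ k = y ^ k)
  rcases eq_or_ne x 0 with rfl | hx
  · rw [zero_pow hk.ne', eq_comm, pow_eq_zero_iff hk.ne'] at hxy
    exact hxy.symm
  rcases eq_or_ne y 0 with rfl | hy
  · rwa [zero_pow hk.ne', pow_eq_zero_iff hk.ne'] at hxy
  simpa using congrArg Units.val (hunits.injective (a₁ := Units.mk0 x hx) (a₂ := Units.mk0 y hy)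
    (Units.ext (by simpa using hxy)))

end PowBijective

section ProjectiveLine

variable {F : Type*} [Field F]

/- The two charts of `ℙ¹` follow the statement: a source point `t` is the line through `(1, t)`
(`none` through `(0, 1)`), while a target line through `(u, v)` is read off as `u / v`. -/

def homogCoord (t : Option F) : F × F :=
  t.elim (0, 1) fun t => (1, t)

@[simp]
theorem homogCoord_none : homogCoord (none : Option F) = (0, 1) := rfl

@[simp]
theorem homogCoord_some (t : F) : homogCoord (some t) = (1, t) := rfl

theorem homogCoord_ne_zero (t : Option F) : homogCoord t ≠ 0 := by
  cases t <;> simp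

theorem exists_eq_smul_homogCoord {p : F × F} (hp : p ≠ 0) :
    ∃ s : F, s ≠ 0 ∧ ∃ t, p = s • homogCoord t := by
  obtain ⟨x, y⟩ := p
  rcases eq_or_ne x 0 with rfl | hx
  · exact ⟨y, fun hy => hp (by simp [hy]), none, by simp⟩
  · exact ⟨x, hx, some (y / x), by simp [mul_div_cancel₀ _ hx]⟩

theorem eq_of_smul_homogCoord_eq {s : F} {t t' : Option F}
    (h : s • homogCoord t = homogCoord t') : t = t' := by
  cases t <;> cases t' <;>
    simp only [homogCoord_none, homogCoord_some, Prod.smul_mk, smul_eq_mul, Prod.mk.injEq,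
      Option.some.injEq] at h ⊢ <;>
    grind

variable [DecidableEq F]

def affineCoord (p : F × F) : Option F :=
  if p.2 = 0 then none else some (p.1 / p.2)

theorem affineCoord_smul {s : F} (hs : s ≠ 0) (p : F × F) :
    affineCoord (s • p) = affineCoord p := by
  simp [affineCoord, hs, mul_div_mul_left]

theorem exists_smul_eq_of_affineCoord_eq {p p' : F × F} (hp : p ≠ 0) (hp' : p' ≠ 0)
    (h : affineCoord p = affineCoord p') : ∃ s : F, s • p = p' := by
  obtain ⟨x, y⟩ := p
  obtain ⟨x', y'⟩ := p'
  unfold affineCoord at h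
  rcases eq_or_ne y 0 with rfl | hy <;> rcases eq_or_ne y' 0 with rfl | hy'
  · have hx : x ≠ 0 := fun hx => hp (by simp [hx])
    exact ⟨x' / x, by simp [div_mul_cancel₀ _ hx]⟩
  · simp [hy'] at h
  · simp [hy] at h
  · simp only [hy, hy', if_false, Option.some.injEq] at h
    refine ⟨y' / y, ?_⟩
    rw [div_eq_div_iff hy hy'] at h
    simp only [Prod.smul_mk, smul_eq_mul, Prod.mk.injEq, div_mul_cancel₀ _ hy, and_true]
    field_simp
    linear_combination h

theorem bijective_iff_bijective_affineCoord_comp [Finite F] {Φ : F × F → F × F} {k : ℕ}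
    (hk : Bijective fun x : F => x ^ k) (hhom : ∀ (s : F) p, Φ (s • p) = s ^ k • Φ p)
    (hne : ∀ p, p ≠ 0 → Φ p ≠ 0) :
    Bijective Φ ↔ Bijective fun t => affineCoord (Φ (homogCoord t)) := by
  rw [← Finite.injective_iff_bijective, ← Finite.injective_iff_bijective]
  constructor
  · intro hΦ t t' h
    obtain ⟨r, hr⟩ := exists_smul_eq_of_affineCoord_eq (hne _ (homogCoord_ne_zero t))
      (hne _ (homogCoord_ne_zero t')) h
    obtain ⟨s, rfl⟩ := hk.surjective r
    exact eq_of_smul_homogCoord_eq (hΦ (by rw [hhom, hr]))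
  · have hk0 : k ≠ 0 := by
      rintro rfl
      exact zero_ne_one (hk.injective (by simp))
    have hΦ0 : Φ 0 = 0 := by simpa [zero_pow hk0] using hhom 0 0
    intro hφ p p' h
    rcases eq_or_ne p 0 with rfl | hp
    · by_contra hp'
      exact hne p' (Ne.symm hp') (h ▸ hΦ0)
    rcases eq_or_ne p' 0 with rfl | hp'
    · exact absurd (h.trans hΦ0) (hne p hp)
    obtain ⟨s, hs, t, rfl⟩ := exists_eq_smul_homogCoord hp
    obtain ⟨s', hs', t', rfl⟩ := exists_eq_smul_homogCoord hp'
    rw [hhom, hhom] at h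
    have htt : t = t' := hφ <| by
      dsimp only
      rw [← affineCoord_smul (pow_ne_zero k hs), h, affineCoord_smul (pow_ne_zero k hs')]
    subst htt
    have hss : s ^ k = s' ^ k :=
      smul_left_injective F (hne _ (homogCoord_ne_zero t)) h
    rw [hk.injective hss]

end ProjectiveLine

section BinaryForm

variable {F : Type*} [Field F]

noncomputable def binaryForm (N k : ℕ) (d : Fin k → F) : MvPolynomial (Fin 2) F :=
  ∑ i : Fin k, C (d i) * X 0 ^ (N - (i : ℕ)) * X 1 ^ (i : ℕ)

variable {N k : ℕ} (d : Fin k → F)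

theorem eval_binaryForm (x y : F) :
    eval ![x, y] (binaryForm N k d) = ∑ i : Fin k, d i * x ^ (N - (i : ℕ)) * y ^ (i : ℕ) := by
  simp [binaryForm]

theorem eval_zero_one_binaryForm_self (d : Fin N → F) :
    eval ![(0 : F), 1] (binaryForm N N d) = 0 := by
  rw [eval_binaryForm]
  exact Finset.sum_eq_zero fun i _ => by simp [zero_pow (Nat.sub_ne_zero_of_lt i.isLt)]

theorem eval_zero_one_binaryForm_succ (d : Fin (N + 1) → F) :
    eval ![(0 : F), 1] (binaryForm N (N + 1) d) = d (Fin.last N) := by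
  rw [eval_binaryForm, Fin.sum_univ_castSucc]
  simp [zero_pow (Nat.sub_ne_zero_of_lt (Fin.is_lt _))]

variable (hk : k ≤ N + 1)
include hk

theorem eval_smul_binaryForm (s x y : F) :
    eval ![s * x, s * y] (binaryForm N k d) = s ^ N * eval ![x, y] (binaryForm N k d) := by
  simp only [eval_binaryForm, Finset.mul_sum]
  refine Finset.sum_congr rfl fun i _ => ?_
  obtain ⟨j, hj⟩ := Nat.exists_eq_add_of_le (Nat.le_of_lt_succ (i.isLt.trans_le hk))
  rw [hj, Nat.add_sub_cancel_left]
  ring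

/- Modulo `x Y - y X` one has `x Y ≡ y X`, so each monomial of `x ^ N P` becomes a multiple
of `X ^ N` and `x ^ N P ≡ P(x, y) X ^ N`; symmetrically `y ^ N P ≡ P(x, y) Y ^ N`. -/
theorem linearForm_dvd_C_pow_mul_sub_X_zero_pow (x y : F) :
    C x * X 1 - C y * X 0 ∣
      C (x ^ N) * binaryForm N k d - C (eval ![x, y] (binaryForm N k d)) * X 0 ^ N := by
  have hsum : C (x ^ N) * binaryForm N k d - C (eval ![x, y] (binaryForm N k d)) * X 0 ^ N =
      ∑ i : Fin k, C (d i) * (C x * X 0) ^ (N - (i : ℕ)) *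
        ((C x * X 1) ^ (i : ℕ) - (C y * X 0) ^ (i : ℕ)) := by
    rw [eval_binaryForm]
    simp only [binaryForm, map_sum, Finset.mul_sum, Finset.sum_mul,
      ← Finset.sum_sub_distrib]
    refine Finset.sum_congr rfl fun i _ => ?_
    obtain ⟨j, hj⟩ := Nat.exists_eq_add_of_le (Nat.le_of_lt_succ (i.isLt.trans_le hk))
    rw [hj, Nat.add_sub_cancel_left]
    simp only [map_mul, map_pow]
    ring
  rw [hsum]
  exact Finset.dvd_sum fun i _ => dvd_mul_of_dvd_right (sub_dvd_pow_sub_pow _ _ _) _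

theorem linearForm_dvd_C_pow_mul_sub_X_one_pow (x y : F) :
    C x * X 1 - C y * X 0 ∣
      C (y ^ N) * binaryForm N k d - C (eval ![x, y] (binaryForm N k d)) * X 1 ^ N := by
  have hsum : C (y ^ N) * binaryForm N k d - C (eval ![x, y] (binaryForm N k d)) * X 1 ^ N =
      ∑ i : Fin k, C (d i) * (C y * X 1) ^ (i : ℕ) *
        ((C y * X 0) ^ (N - (i : ℕ)) - (C x * X 1) ^ (N - (i : ℕ))) := by
    rw [eval_binaryForm]
    simp only [binaryForm, map_sum, Finset.mul_sum, Finset.sum_mul,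
      ← Finset.sum_sub_distrib]
    refine Finset.sum_congr rfl fun i _ => ?_
    obtain ⟨j, hj⟩ := Nat.exists_eq_add_of_le (Nat.le_of_lt_succ (i.isLt.trans_le hk))
    rw [hj, Nat.add_sub_cancel_left]
    simp only [map_mul, map_pow]
    ring
  rw [hsum, ← neg_dvd, neg_sub]
  exact Finset.dvd_sum fun i _ => dvd_mul_of_dvd_right (sub_dvd_pow_sub_pow _ _ _) _

theorem linearForm_dvd_binaryForm {x y : F} (hxy : (x, y) ≠ 0)
    (h : eval ![x, y] (binaryForm N k d) = 0) : C x * X 1 - C y * X 0 ∣ binaryForm N k d := by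
  rcases eq_or_ne x 0 with rfl | hx
  · have hy : y ≠ 0 := fun hy => hxy (by simp [hy])
    have := linearForm_dvd_C_pow_mul_sub_X_one_pow d hk 0 y
    simp only [h, map_zero, zero_mul, sub_zero] at this ⊢
    rwa [IsUnit.dvd_mul_left ((pow_ne_zero N hy).isUnit.map C)] at this
  · have := linearForm_dvd_C_pow_mul_sub_X_zero_pow d hk x y
    rwa [h, map_zero, zero_mul, sub_zero, IsUnit.dvd_mul_left ((pow_ne_zero N hx).isUnit.map C)]
      at this

end BinaryForm

theorem eq_zero_of_common_zero_binaryForm {F : Type*} [Field F] {N k l : ℕ} (hk : k ≤ N + 1)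
    (hl : l ≤ N + 1) {d : Fin k → F} {e : Fin l → F}
    (hcop : ∀ p, p ∣ binaryForm N k d → p ∣ binaryForm N l e → IsUnit p) {x y : F}
    (hd : eval ![x, y] (binaryForm N k d) = 0) (he : eval ![x, y] (binaryForm N l e) = 0) :
    (x, y) = 0 := by
  by_contra hxy
  have hunit := (hcop _ (linearForm_dvd_binaryForm d hk hxy hd)
    (linearForm_dvd_binaryForm e hl hxy he)).map (eval ![0, 0])
  simp at hunit

theorem stmt_10 {F : Type*} [Field F] [Fintype F] [DecidableEq F]
    (n m : ℕ) (hm : 0 < m)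
    (hgcd : Nat.gcd (m + n) (Fintype.card F - 1) = 1)
    (a : Fin n → F) (b : Fin (n + 1) → F) (c : Fin (m + 1) → F)
    (f₁ f₂ g : MvPolynomial (Fin 2) F)
    (hf₁ : f₁ = ∑ i : Fin n, C (a i) * X 0 ^ (n - (i : ℕ)) * X 1 ^ (i : ℕ))
    (hf₂ : f₂ = ∑ i : Fin (n + 1), C (b i) * X 0 ^ (n - (i : ℕ)) * X 1 ^ (i : ℕ))
    (hg : g = ∑ i : Fin (m + 1), C (c i) * X 0 ^ (m - (i : ℕ)) * X 1 ^ (i : ℕ))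
    (hgzero : ∀ x y : F, eval ![x, y] g = 0 → x = 0 ∧ y = 0)
    (hcop : ∀ d : MvPolynomial (Fin 2) F, d ∣ f₁ → d ∣ f₂ → IsUnit d) :
    Function.Bijective (fun p : F × F =>
      (eval ![p.1, p.2] (f₁ * g), eval ![p.1, p.2] (f₂ * g))) ↔
    Function.Bijective (fun t : Option F =>
      match t with
      | none => if b (Fin.last n) = 0 then none else some (0 : F)
      | some t =>
          if eval ![1, t] f₂ = 0 then none
          else some (eval ![1, t] f₁ / eval ![1, t] f₂)) := by
  change f₁ = binaryForm n n a at hf₁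
  change f₂ = binaryForm n (n + 1) b at hf₂
  change g = binaryForm m (m + 1) c at hg
  subst hf₁ hf₂ hg
  set Φ : F × F → F × F := fun p =>
    (eval ![p.1, p.2] (binaryForm n n a * binaryForm m (m + 1) c),
      eval ![p.1, p.2] (binaryForm n (n + 1) b * binaryForm m (m + 1) c))
  have hg_ne : ∀ p : F × F, p ≠ 0 → eval ![p.1, p.2] (binaryForm m (m + 1) c) ≠ 0 :=
    fun p hp h => hp (Prod.ext_iff.2 (hgzero p.1 p.2 h))
  have hhom : ∀ (s : F) p, Φ (s • p) = s ^ (m + n) • Φ p := by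
    intro s p
    ext <;> simp only [Φ, Prod.smul_fst, Prod.smul_snd, smul_eq_mul, eval_mul,
      eval_smul_binaryForm _ le_rfl, eval_smul_binaryForm _ n.le_succ, pow_add] <;> ring
  have hne : ∀ p, p ≠ 0 → Φ p ≠ 0 := by
    intro p hp hΦ
    simp only [Φ, Prod.mk_eq_zero, eval_mul, mul_eq_zero, hg_ne p hp, or_false] at hΦ
    exact hp (eq_zero_of_common_zero_binaryForm n.le_succ le_rfl hcop hΦ.1 hΦ.2)
  have hΦ_coord : ∀ t, affineCoord (Φ (homogCoord t)) = affineCoord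
      (eval ![(homogCoord t).1, (homogCoord t).2] (binaryForm n n a),
        eval ![(homogCoord t).1, (homogCoord t).2] (binaryForm n (n + 1) b)) := by
    intro t
    refine Eq.trans ?_ (affineCoord_smul (hg_ne _ (homogCoord_ne_zero t)) _)
    simp only [Φ, eval_mul, Prod.smul_mk, smul_eq_mul, mul_comm]
  convert bijective_iff_bijective_affineCoord_comp
    (pow_bijective_of_coprime_card_sub_one (Nat.add_pos_left hm n) hgcd) hhom hne using 2
  funext t
  rw [hΦ_coord]
  cases t with
  | none =>
    simp only [homogCoord_none, affineCoord, eval_zero_one_binaryForm_self,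
      eval_zero_one_binaryForm_succ, zero_div]
  | some t =>
    rfl
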